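/- arXiv:math/9810138 — 2 statements merged into one kernel-verified Lean document; each statement's English description precedes it below -/
import Mathlib

section
/- The mean curvature vector of the ℝ⁴ Weierstrass surface equals H⃗ = (2/(u₁u₂))·[Re(pφ₁ψ₂ + p̄ψ₁φ₂), Im(pφ₁ψ₂ + p̄ψ₁φ₂), Re(pφ₁φ̄₂ - p̄ψ₁ψ̄₂), Im(pψ̄₁ψ₂ - p̄φ̄₁φ₂)]. -/
open Complex

/-- Partial derivative in the x-direction. -/
noncomputable def dX (f : ℝ × ℝ → ℂ) (w : ℝ × ℝ) : ℂ := fderiv ℝ f w (1, 0)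

/-- Partial derivative in the y-direction. -/
noncomputable def dY (f : ℝ × ℝ → ℂ) (w : ℝ × ℝ) : ℂ := fderiv ℝ f w (0, 1)

/-- Wirtinger derivative ∂/∂z = (∂ₓ - i ∂_y)/2. -/
noncomputable def Wz (f : ℝ × ℝ → ℂ) : ℝ × ℝ → ℂ := fun w => (dX f w - Complex.I * dY f w) / 2

/-- Wirtinger derivative ∂/∂z̄ = (∂ₓ + i ∂_y)/2. -/
noncomputable def Wzb (f : ℝ × ℝ → ℂ) : ℝ × ℝ → ℂ := fun w => (dX f w + Complex.I * dY f w) / 2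

section helpers
variable (f g : ℝ × ℝ → ℂ) (w u : ℝ × ℝ)

lemma fd_add (hf : DifferentiableAt ℝ f w) (hg : DifferentiableAt ℝ g w) :
    fderiv ℝ (fun v => f v + g v) w u = fderiv ℝ f w u + fderiv ℝ g w u := by
  rw [fderiv_fun_add hf hg]; simp

lemma fd_sub (hf : DifferentiableAt ℝ f w) (hg : DifferentiableAt ℝ g w) :
    fderiv ℝ (fun v => f v - g v) w u = fderiv ℝ f w u - fderiv ℝ g w u := by
  rw [fderiv_fun_sub hf hg]; simp

lemma fd_mul (hf : DifferentiableAt ℝ f w) (hg : DifferentiableAt ℝ g w) :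
    fderiv ℝ (fun v => f v * g v) w u = fderiv ℝ f w u * g w + f w * fderiv ℝ g w u := by
  rw [fderiv_fun_mul hf hg]; simp [smul_eq_mul]; ring

lemma fd_const_mul (a : ℂ) (hf : DifferentiableAt ℝ f w) :
    fderiv ℝ (fun v => a * f v) w u = a * fderiv ℝ f w u := by
  rw [fderiv_const_mul hf a]; simp

lemma fd_star :
    fderiv ℝ (fun v => (starRingEnd ℂ) (f v)) w u = (starRingEnd ℂ) (fderiv ℝ f w u) := by
  have h : (fun v => (starRingEnd ℂ) (f v)) = fun v => star (f v) := rfl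
  rw [h, fderiv_star]; simp

lemma fd_real (g₀ : ℝ × ℝ → ℝ) (hg : DifferentiableAt ℝ g₀ w) :
    fderiv ℝ (fun v => ((g₀ v : ℝ) : ℂ)) w u = ((fderiv ℝ g₀ w u : ℝ) : ℂ) := by
  have h : (fun v => ((g₀ v : ℝ) : ℂ)) = Complex.ofRealCLM ∘ g₀ := rfl
  rw [h, fderiv_comp w Complex.ofRealCLM.differentiableAt hg, ContinuousLinearMap.fderiv]
  simp

lemma Wz_add (hf : DifferentiableAt ℝ f w) (hg : DifferentiableAt ℝ g w) :
    Wz (fun v => f v + g v) w = Wz f w + Wz g w := by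
  simp only [Wz, dX, dY, fd_add f g w _ hf hg]; ring

lemma Wz_sub (hf : DifferentiableAt ℝ f w) (hg : DifferentiableAt ℝ g w) :
    Wz (fun v => f v - g v) w = Wz f w - Wz g w := by
  simp only [Wz, dX, dY, fd_sub f g w _ hf hg]; ring

lemma Wzb_add (hf : DifferentiableAt ℝ f w) (hg : DifferentiableAt ℝ g w) :
    Wzb (fun v => f v + g v) w = Wzb f w + Wzb g w := by
  simp only [Wzb, dX, dY, fd_add f g w _ hf hg]; ring

lemma Wz_const_mul (a : ℂ) (hf : DifferentiableAt ℝ f w) :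
    Wz (fun v => a * f v) w = a * Wz f w := by
  simp only [Wz, dX, dY, fd_const_mul f w _ a hf]; ring

lemma Wzb_const_mul (a : ℂ) (hf : DifferentiableAt ℝ f w) :
    Wzb (fun v => a * f v) w = a * Wzb f w := by
  simp only [Wzb, dX, dY, fd_const_mul f w _ a hf]; ring

lemma Wz_mul (hf : DifferentiableAt ℝ f w) (hg : DifferentiableAt ℝ g w) :
    Wz (fun v => f v * g v) w = Wz f w * g w + f w * Wz g w := by
  simp only [Wz, dX, dY, fd_mul f g w _ hf hg]; ring

lemma Wzb_mul (hf : DifferentiableAt ℝ f w) (hg : DifferentiableAt ℝ g w) :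
    Wzb (fun v => f v * g v) w = Wzb f w * g w + f w * Wzb g w := by
  simp only [Wzb, dX, dY, fd_mul f g w _ hf hg]; ring

lemma Wz_conj :
    Wz (fun v => (starRingEnd ℂ) (f v)) w = (starRingEnd ℂ) (Wzb f w) := by
  simp only [Wz, Wzb, dX, dY, fd_star]
  rw [map_div₀, map_add, map_mul, Complex.conj_I, map_ofNat]
  ring

lemma Wzb_realfun (g₀ : ℝ × ℝ → ℝ) (hg : DifferentiableAt ℝ g₀ w) :
    Wzb (fun v => ((g₀ v : ℝ) : ℂ)) w = (starRingEnd ℂ) (Wz (fun v => ((g₀ v : ℝ) : ℂ)) w) := by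
  simp only [Wz, Wzb, dX, dY, fd_real w (1,0) g₀ hg, fd_real w (0,1) g₀ hg]
  rw [map_div₀, map_sub, map_mul, Complex.conj_I, Complex.conj_ofReal, Complex.conj_ofReal,
    map_ofNat]
  ring

lemma re_eqc (z : ℂ) : ((z.re : ℝ) : ℂ) = (z + (starRingEnd ℂ) z) / 2 := by
  rw [Complex.add_conj]; push_cast; ring

lemma im_eqc (z : ℂ) : ((z.im : ℝ) : ℂ) = -(Complex.I / 2) * (z - (starRingEnd ℂ) z) := by
  rw [Complex.sub_conj]; push_cast
  linear_combination (z.im : ℂ) * Complex.I_sq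

lemma div_half_eq (u b : ℂ) (hu : u ≠ 0) : b / ((1 / 2 : ℂ) * u) = 2 / u * b := by
  field_simp

end helpers

theorem stmt_4 (ψ₁ φ₁ ψ₂ φ₂ p : ℝ × ℝ → ℂ) (X : Fin 4 → ℝ × ℝ → ℝ)
    (hψ₁ : ContDiff ℝ (⊤ : ℕ∞) ψ₁) (hφ₁ : ContDiff ℝ (⊤ : ℕ∞) φ₁)
    (hψ₂ : ContDiff ℝ (⊤ : ℕ∞) ψ₂) (hφ₂ : ContDiff ℝ (⊤ : ℕ∞) φ₂) (hp : ContDiff ℝ (⊤ : ℕ∞) p)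
    (hX : ∀ i, ContDiff ℝ (⊤ : ℕ∞) (X i))
    (h1 : ∀ w, Wz ψ₁ w = p w * φ₁ w)
    (h2 : ∀ w, Wzb φ₁ w = -(starRingEnd ℂ) (p w) * ψ₁ w)
    (h3 : ∀ w, Wz ψ₂ w = (starRingEnd ℂ) (p w) * φ₂ w)
    (h4 : ∀ w, Wzb φ₂ w = -(p w) * ψ₂ w)
    (hXa : ∀ w, Wz (fun v => (X 0 v : ℂ) + Complex.I * (X 1 v : ℂ)) w = -(φ₁ w * φ₂ w))
    (hXb : ∀ w, Wzb (fun v => (X 0 v : ℂ) + Complex.I * (X 1 v : ℂ)) w = ψ₁ w * ψ₂ w)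
    (hXc : ∀ w, Wz (fun v => (X 2 v : ℂ) + Complex.I * (X 3 v : ℂ)) w
        = φ₁ w * (starRingEnd ℂ) (ψ₂ w))
    (hXd : ∀ w, Wzb (fun v => (X 2 v : ℂ) + Complex.I * (X 3 v : ℂ)) w
        = ψ₁ w * (starRingEnd ℂ) (φ₂ w))
    (hne : ∀ w, (Complex.normSq (ψ₁ w) + Complex.normSq (φ₁ w)) *
        (Complex.normSq (ψ₂ w) + Complex.normSq (φ₂ w)) ≠ 0) :
    ∀ w,
      Wz (fun v => Wzb (fun v' => (X 0 v' : ℂ)) v) w /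
          ((1 / 2 : ℂ) * (((Complex.normSq (ψ₁ w) + Complex.normSq (φ₁ w)) *
            (Complex.normSq (ψ₂ w) + Complex.normSq (φ₂ w)) : ℝ) : ℂ))
        = (2 / (((Complex.normSq (ψ₁ w) + Complex.normSq (φ₁ w)) *
            (Complex.normSq (ψ₂ w) + Complex.normSq (φ₂ w)) : ℝ) : ℂ)) *
          (((p w * φ₁ w * ψ₂ w + (starRingEnd ℂ) (p w) * ψ₁ w * φ₂ w).re : ℝ) : ℂ) ∧
      Wz (fun v => Wzb (fun v' => (X 1 v' : ℂ)) v) w /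
          ((1 / 2 : ℂ) * (((Complex.normSq (ψ₁ w) + Complex.normSq (φ₁ w)) *
            (Complex.normSq (ψ₂ w) + Complex.normSq (φ₂ w)) : ℝ) : ℂ))
        = (2 / (((Complex.normSq (ψ₁ w) + Complex.normSq (φ₁ w)) *
            (Complex.normSq (ψ₂ w) + Complex.normSq (φ₂ w)) : ℝ) : ℂ)) *
          (((p w * φ₁ w * ψ₂ w + (starRingEnd ℂ) (p w) * ψ₁ w * φ₂ w).im : ℝ) : ℂ) ∧
      Wz (fun v => Wzb (fun v' => (X 2 v' : ℂ)) v) w /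
          ((1 / 2 : ℂ) * (((Complex.normSq (ψ₁ w) + Complex.normSq (φ₁ w)) *
            (Complex.normSq (ψ₂ w) + Complex.normSq (φ₂ w)) : ℝ) : ℂ))
        = (2 / (((Complex.normSq (ψ₁ w) + Complex.normSq (φ₁ w)) *
            (Complex.normSq (ψ₂ w) + Complex.normSq (φ₂ w)) : ℝ) : ℂ)) *
          (((p w * φ₁ w * (starRingEnd ℂ) (φ₂ w) -
              (starRingEnd ℂ) (p w) * ψ₁ w * (starRingEnd ℂ) (ψ₂ w)).re : ℝ) : ℂ) ∧
      Wz (fun v => Wzb (fun v' => (X 3 v' : ℂ)) v) w /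
          ((1 / 2 : ℂ) * (((Complex.normSq (ψ₁ w) + Complex.normSq (φ₁ w)) *
            (Complex.normSq (ψ₂ w) + Complex.normSq (φ₂ w)) : ℝ) : ℂ))
        = (2 / (((Complex.normSq (ψ₁ w) + Complex.normSq (φ₁ w)) *
            (Complex.normSq (ψ₂ w) + Complex.normSq (φ₂ w)) : ℝ) : ℂ)) *
          (((p w * (starRingEnd ℂ) (ψ₁ w) * ψ₂ w -
              (starRingEnd ℂ) (p w) * (starRingEnd ℂ) (φ₁ w) * φ₂ w).im : ℝ) : ℂ) := by
  have dψ₁ : Differentiable ℝ ψ₁ := hψ₁.differentiable (by simp)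
  have dφ₁ : Differentiable ℝ φ₁ := hφ₁.differentiable (by simp)
  have dψ₂ : Differentiable ℝ ψ₂ := hψ₂.differentiable (by simp)
  have dφ₂ : Differentiable ℝ φ₂ := hφ₂.differentiable (by simp)
  have dXr : ∀ i, Differentiable ℝ (X i) := fun i => (hX i).differentiable (by simp)
  have dXc : ∀ i, Differentiable ℝ (fun v => ((X i v : ℝ) : ℂ)) := fun i =>
    Complex.ofRealCLM.differentiable.comp (dXr i)
  have dcφ₁ : Differentiable ℝ (fun v => (starRingEnd ℂ) (φ₁ v)) := dφ₁.star
  have dcφ₂ : Differentiable ℝ (fun v => (starRingEnd ℂ) (φ₂ v)) := dφ₂.star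
  have dcψ₁ : Differentiable ℝ (fun v => (starRingEnd ℂ) (ψ₁ v)) := dψ₁.star
  have dcψ₂ : Differentiable ℝ (fun v => (starRingEnd ℂ) (ψ₂ v)) := dψ₂.star
  -- realness
  have hr : ∀ i v, Wzb (fun v' => ((X i v' : ℝ) : ℂ)) v
      = (starRingEnd ℂ) (Wz (fun v' => ((X i v' : ℝ) : ℂ)) v) := fun i v =>
    Wzb_realfun v (X i) (dXr i v)
  -- decompose the pair (0,1)
  have hfun0 : (fun v => Wzb (fun v' => ((X 0 v' : ℝ) : ℂ)) v)
      = fun v => (2⁻¹ : ℂ) * (ψ₁ v * ψ₂ v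
          - (starRingEnd ℂ) (φ₁ v) * (starRingEnd ℂ) (φ₂ v)) := by
    funext v
    have ea := hXa v
    have eb := hXb v
    rw [Wz_add _ _ v (dXc 0 v) ((dXc 1 v).const_mul Complex.I),
      Wz_const_mul _ v Complex.I (dXc 1 v)] at ea
    rw [Wzb_add _ _ v (dXc 0 v) ((dXc 1 v).const_mul Complex.I),
      Wzb_const_mul _ v Complex.I (dXc 1 v), hr 0 v, hr 1 v] at eb
    have ea' := congrArg (starRingEnd ℂ) ea
    simp only [map_add, map_mul, map_neg, Complex.conj_I] at ea'
    rw [hr 0 v]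
    linear_combination (ea' + eb) / 2
  have hfun1 : (fun v => Wzb (fun v' => ((X 1 v' : ℝ) : ℂ)) v)
      = fun v => (-(Complex.I / 2)) * (ψ₁ v * ψ₂ v
          + (starRingEnd ℂ) (φ₁ v) * (starRingEnd ℂ) (φ₂ v)) := by
    funext v
    have ea := hXa v
    have eb := hXb v
    rw [Wz_add _ _ v (dXc 0 v) ((dXc 1 v).const_mul Complex.I),
      Wz_const_mul _ v Complex.I (dXc 1 v)] at ea
    rw [Wzb_add _ _ v (dXc 0 v) ((dXc 1 v).const_mul Complex.I),
      Wzb_const_mul _ v Complex.I (dXc 1 v), hr 0 v, hr 1 v] at eb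
    have ea' := congrArg (starRingEnd ℂ) ea
    simp only [map_add, map_mul, map_neg, Complex.conj_I] at ea'
    rw [hr 1 v]
    linear_combination (-(Complex.I) / 2) * (eb - ea')
      + (starRingEnd ℂ) (Wz (fun v' => ((X 1 v' : ℝ) : ℂ)) v) * Complex.I_sq
  have hfun2 : (fun v => Wzb (fun v' => ((X 2 v' : ℝ) : ℂ)) v)
      = fun v => (2⁻¹ : ℂ) * (ψ₁ v * (starRingEnd ℂ) (φ₂ v)
          + (starRingEnd ℂ) (φ₁ v) * ψ₂ v) := by
    funext v
    have ea := hXc v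
    have eb := hXd v
    rw [Wz_add _ _ v (dXc 2 v) ((dXc 3 v).const_mul Complex.I),
      Wz_const_mul _ v Complex.I (dXc 3 v)] at ea
    rw [Wzb_add _ _ v (dXc 2 v) ((dXc 3 v).const_mul Complex.I),
      Wzb_const_mul _ v Complex.I (dXc 3 v), hr 2 v, hr 3 v] at eb
    have ea' := congrArg (starRingEnd ℂ) ea
    simp only [map_add, map_mul, map_neg, Complex.conj_I, Complex.conj_conj] at ea'
    rw [hr 2 v]
    linear_combination (ea' + eb) / 2
  have hfun3 : (fun v => Wzb (fun v' => ((X 3 v' : ℝ) : ℂ)) v)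
      = fun v => (-(Complex.I / 2)) * (ψ₁ v * (starRingEnd ℂ) (φ₂ v)
          - (starRingEnd ℂ) (φ₁ v) * ψ₂ v) := by
    funext v
    have ea := hXc v
    have eb := hXd v
    rw [Wz_add _ _ v (dXc 2 v) ((dXc 3 v).const_mul Complex.I),
      Wz_const_mul _ v Complex.I (dXc 3 v)] at ea
    rw [Wzb_add _ _ v (dXc 2 v) ((dXc 3 v).const_mul Complex.I),
      Wzb_const_mul _ v Complex.I (dXc 3 v), hr 2 v, hr 3 v] at eb
    have ea' := congrArg (starRingEnd ℂ) ea
    simp only [map_add, map_mul, map_neg, Complex.conj_I, Complex.conj_conj] at ea'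
    rw [hr 3 v]
    linear_combination (-(Complex.I) / 2) * (eb - ea')
      + (starRingEnd ℂ) (Wz (fun v' => ((X 3 v' : ℝ) : ℂ)) v) * Complex.I_sq
  intro w
  have hu : (((Complex.normSq (ψ₁ w) + Complex.normSq (φ₁ w)) *
      (Complex.normSq (ψ₂ w) + Complex.normSq (φ₂ w)) : ℝ) : ℂ) ≠ 0 :=
    Complex.ofReal_ne_zero.mpr (hne w)
  -- building blocks at w
  have A0 : Wz (fun v => ψ₁ v * ψ₂ v) w
      = p w * φ₁ w * ψ₂ w + ψ₁ w * ((starRingEnd ℂ) (p w) * φ₂ w) := by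
    rw [Wz_mul ψ₁ ψ₂ w (dψ₁ w) (dψ₂ w), h1 w, h3 w]
  have B0 : Wz (fun v => (starRingEnd ℂ) (φ₁ v) * (starRingEnd ℂ) (φ₂ v)) w
      = (starRingEnd ℂ) (-(starRingEnd ℂ) (p w) * ψ₁ w) * (starRingEnd ℂ) (φ₂ w)
        + (starRingEnd ℂ) (φ₁ w) * (starRingEnd ℂ) (-(p w) * ψ₂ w) := by
    rw [Wz_mul (fun v => (starRingEnd ℂ) (φ₁ v)) (fun v => (starRingEnd ℂ) (φ₂ v)) w
        (dcφ₁ w) (dcφ₂ w), Wz_conj φ₁ w, Wz_conj φ₂ w, h2 w, h4 w]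
  have A2 : Wz (fun v => ψ₁ v * (starRingEnd ℂ) (φ₂ v)) w
      = p w * φ₁ w * (starRingEnd ℂ) (φ₂ w)
        + ψ₁ w * (starRingEnd ℂ) (-(p w) * ψ₂ w) := by
    rw [Wz_mul ψ₁ (fun v => (starRingEnd ℂ) (φ₂ v)) w (dψ₁ w) (dcφ₂ w), Wz_conj φ₂ w,
      h1 w, h4 w]
  have B2 : Wz (fun v => (starRingEnd ℂ) (φ₁ v) * ψ₂ v) w
      = (starRingEnd ℂ) (-(starRingEnd ℂ) (p w) * ψ₁ w) * ψ₂ w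
        + (starRingEnd ℂ) (φ₁ w) * ((starRingEnd ℂ) (p w) * φ₂ w) := by
    rw [Wz_mul (fun v => (starRingEnd ℂ) (φ₁ v)) ψ₂ w (dcφ₁ w) (dψ₂ w), Wz_conj φ₁ w,
      h2 w, h3 w]
  have dA0 : DifferentiableAt ℝ (fun v => ψ₁ v * ψ₂ v) w := (dψ₁ w).mul (dψ₂ w)
  have dB0 : DifferentiableAt ℝ
      (fun v => (starRingEnd ℂ) (φ₁ v) * (starRingEnd ℂ) (φ₂ v)) w :=
    (dcφ₁ w).mul (dcφ₂ w)
  have dA2 : DifferentiableAt ℝ (fun v => ψ₁ v * (starRingEnd ℂ) (φ₂ v)) w :=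
    (dψ₁ w).mul (dcφ₂ w)
  have dB2 : DifferentiableAt ℝ (fun v => (starRingEnd ℂ) (φ₁ v) * ψ₂ v) w :=
    (dcφ₁ w).mul (dψ₂ w)
  refine ⟨?_, ?_, ?_, ?_⟩
  · have K : Wz (fun v => (2⁻¹ : ℂ) * (ψ₁ v * ψ₂ v
        - (starRingEnd ℂ) (φ₁ v) * (starRingEnd ℂ) (φ₂ v))) w
        = (((p w * φ₁ w * ψ₂ w + (starRingEnd ℂ) (p w) * ψ₁ w * φ₂ w).re : ℝ) : ℂ) := by
      rw [Wz_const_mul _ w _ (dA0.fun_sub dB0), Wz_sub _ _ w dA0 dB0, A0, B0,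
        re_eqc (p w * φ₁ w * ψ₂ w + (starRingEnd ℂ) (p w) * ψ₁ w * φ₂ w)]
      simp only [map_add, map_sub, map_mul, map_neg, Complex.conj_conj]
      ring
    rw [hfun0, K]
    exact div_half_eq _ _ hu
  · have K : Wz (fun v => (-(Complex.I / 2)) * (ψ₁ v * ψ₂ v
        + (starRingEnd ℂ) (φ₁ v) * (starRingEnd ℂ) (φ₂ v))) w
        = (((p w * φ₁ w * ψ₂ w + (starRingEnd ℂ) (p w) * ψ₁ w * φ₂ w).im : ℝ) : ℂ) := by
      rw [Wz_const_mul _ w _ (dA0.fun_add dB0), Wz_add _ _ w dA0 dB0, A0, B0,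
        im_eqc (p w * φ₁ w * ψ₂ w + (starRingEnd ℂ) (p w) * ψ₁ w * φ₂ w)]
      simp only [map_add, map_sub, map_mul, map_neg, Complex.conj_conj]
      ring
    rw [hfun1, K]
    exact div_half_eq _ _ hu
  · have K : Wz (fun v => (2⁻¹ : ℂ) * (ψ₁ v * (starRingEnd ℂ) (φ₂ v)
        + (starRingEnd ℂ) (φ₁ v) * ψ₂ v)) w
        = (((p w * φ₁ w * (starRingEnd ℂ) (φ₂ w)
            - (starRingEnd ℂ) (p w) * ψ₁ w * (starRingEnd ℂ) (ψ₂ w)).re : ℝ) : ℂ) := by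
      rw [Wz_const_mul _ w _ (dA2.fun_add dB2), Wz_add _ _ w dA2 dB2, A2, B2,
        re_eqc (p w * φ₁ w * (starRingEnd ℂ) (φ₂ w)
          - (starRingEnd ℂ) (p w) * ψ₁ w * (starRingEnd ℂ) (ψ₂ w))]
      simp only [map_add, map_sub, map_mul, map_neg, Complex.conj_conj]
      ring
    rw [hfun2, K]
    exact div_half_eq _ _ hu
  · have K : Wz (fun v => (-(Complex.I / 2)) * (ψ₁ v * (starRingEnd ℂ) (φ₂ v)
        - (starRingEnd ℂ) (φ₁ v) * ψ₂ v)) w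
        = (((p w * (starRingEnd ℂ) (ψ₁ w) * ψ₂ w
            - (starRingEnd ℂ) (p w) * (starRingEnd ℂ) (φ₁ w) * φ₂ w).im : ℝ) : ℂ) := by
      rw [Wz_const_mul _ w _ (dA2.fun_sub dB2), Wz_sub _ _ w dA2 dB2, A2, B2,
        im_eqc (p w * (starRingEnd ℂ) (ψ₁ w) * ψ₂ w
          - (starRingEnd ℂ) (p w) * (starRingEnd ℂ) (φ₁ w) * φ₂ w)]
      simp only [map_add, map_sub, map_mul, map_neg, Complex.conj_conj]
      ring
    rw [hfun3, K]
    exact div_half_eq _ _ hu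
end

section
/- For the Minkowski space ℝ^{3,1} Weierstrass representation, where X is defined by d(X¹+iX²) = φ₁ψ̄₂ dz + ψ₁φ̄₂ dz̄, d(X³+X⁴) = ψ̄₁φ₁ dz + ψ₁φ̄₁ dz̄, d(X³-X⁴) = -(ψ̄₂φ₂ dz + ψ₂φ̄₂ dz̄), with ∂ψ_α/∂z = pφ_α, ∂φ_α/∂z̄ = qψ_α (p, q real), the induced Lorentzian metric satisfies g_{zz} = g_{z̄z̄} = 0 and g_{zz̄} = (1/2)|ψ₁φ₂ - φ₁ψ₂|², where the inner product on ℝ^{3,1} is ⟨a,b⟩ = a₁b₁ + a₂b₂ + a₃b₃ - a₄b₄. -/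
open Complex

lemma Wz_comb (f g : ℝ × ℝ → ℂ) (c : ℂ) (w : ℝ × ℝ)
    (hf : DifferentiableAt ℝ f w) (hg : DifferentiableAt ℝ g w) :
    Wz (fun v => f v + c * g v) w = Wz f w + c * Wz g w := by
  unfold Wz dX dY
  rw [fderiv_fun_add hf (hg.const_mul c), fderiv_const_mul hg c]
  simp only [ContinuousLinearMap.add_apply, ContinuousLinearMap.smul_apply, smul_eq_mul]
  ring

lemma Wzb_comb (f g : ℝ × ℝ → ℂ) (c : ℂ) (w : ℝ × ℝ)
    (hf : DifferentiableAt ℝ f w) (hg : DifferentiableAt ℝ g w) :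
    Wzb (fun v => f v + c * g v) w = Wzb f w + c * Wzb g w := by
  unfold Wzb dX dY
  rw [fderiv_fun_add hf (hg.const_mul c), fderiv_const_mul hg c]
  simp only [ContinuousLinearMap.add_apply, ContinuousLinearMap.smul_apply, smul_eq_mul]
  ring

lemma Wzb_conj_real (f : ℝ × ℝ → ℝ) (w : ℝ × ℝ) (hf : DifferentiableAt ℝ f w) :
    Wzb (fun v => (f v : ℂ)) w = (starRingEnd ℂ) (Wz (fun v => (f v : ℂ)) w) := by
  have hfd : fderiv ℝ (fun v => (f v : ℂ)) w = Complex.ofRealCLM.comp (fderiv ℝ f w) :=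
    (Complex.ofRealCLM.hasFDerivAt.comp w hf.hasFDerivAt).fderiv
  unfold Wzb Wz dX dY
  rw [hfd]
  simp only [ContinuousLinearMap.comp_apply, Complex.ofRealCLM_apply, map_div₀, map_sub,
    map_mul, Complex.conj_I, Complex.conj_ofReal, map_ofNat]
  ring

theorem stmt_8 (ψ₁ φ₁ ψ₂ φ₂ : ℝ × ℝ → ℂ) (p q : ℝ × ℝ → ℝ) (X : Fin 4 → ℝ × ℝ → ℝ)
    (hψ₁ : ContDiff ℝ (⊤ : ℕ∞) ψ₁) (hφ₁ : ContDiff ℝ (⊤ : ℕ∞) φ₁)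
    (hψ₂ : ContDiff ℝ (⊤ : ℕ∞) ψ₂) (hφ₂ : ContDiff ℝ (⊤ : ℕ∞) φ₂)
    (hp : ContDiff ℝ (⊤ : ℕ∞) p) (hq : ContDiff ℝ (⊤ : ℕ∞) q)
    (hX : ∀ i, ContDiff ℝ (⊤ : ℕ∞) (X i))
    (h1 : ∀ w, Wz ψ₁ w = (p w : ℂ) * φ₁ w) (h2 : ∀ w, Wzb φ₁ w = (q w : ℂ) * ψ₁ w)
    (h3 : ∀ w, Wz ψ₂ w = (p w : ℂ) * φ₂ w) (h4 : ∀ w, Wzb φ₂ w = (q w : ℂ) * ψ₂ w)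
    (hXa : ∀ w, Wz (fun v => (X 0 v : ℂ) + Complex.I * (X 1 v : ℂ)) w
        = φ₁ w * (starRingEnd ℂ) (ψ₂ w))
    (hXb : ∀ w, Wzb (fun v => (X 0 v : ℂ) + Complex.I * (X 1 v : ℂ)) w
        = ψ₁ w * (starRingEnd ℂ) (φ₂ w))
    (hXc : ∀ w, Wz (fun v => (X 2 v : ℂ) + (X 3 v : ℂ)) w = (starRingEnd ℂ) (ψ₁ w) * φ₁ w)
    (hXd : ∀ w, Wzb (fun v => (X 2 v : ℂ) + (X 3 v : ℂ)) w = ψ₁ w * (starRingEnd ℂ) (φ₁ w))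
    (hXe : ∀ w, Wz (fun v => (X 2 v : ℂ) - (X 3 v : ℂ)) w = -((starRingEnd ℂ) (ψ₂ w) * φ₂ w))
    (hXf : ∀ w, Wzb (fun v => (X 2 v : ℂ) - (X 3 v : ℂ)) w = -(ψ₂ w * (starRingEnd ℂ) (φ₂ w))) :
    ∀ w, (∑ i : Fin 4, (![1, 1, 1, -1] : Fin 4 → ℂ) i * (Wz (fun v => (X i v : ℂ)) w) ^ 2 = 0) ∧
      (∑ i : Fin 4, (![1, 1, 1, -1] : Fin 4 → ℂ) i * (Wzb (fun v => (X i v : ℂ)) w) ^ 2 = 0) ∧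
      (∑ i : Fin 4, (![1, 1, 1, -1] : Fin 4 → ℂ) i *
          (Wz (fun v => (X i v : ℂ)) w * Wzb (fun v => (X i v : ℂ)) w)
        = (1 / 2 : ℂ) * (Complex.normSq (ψ₁ w * φ₂ w - φ₁ w * ψ₂ w) : ℂ)) := by
  intro w
  have hd : ∀ i, DifferentiableAt ℝ (fun v => ((X i v : ℝ) : ℂ)) w := fun i =>
    (Complex.ofRealCLM.differentiable.comp ((hX i).differentiable (by simp))).differentiableAt
  have hdr : ∀ i, DifferentiableAt ℝ (X i) w := fun i =>
    ((hX i).differentiable (by simp)).differentiableAt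
  -- notation
  set a0 := Wz (fun v => ((X 0 v : ℝ) : ℂ)) w with ha0def
  set a1 := Wz (fun v => ((X 1 v : ℝ) : ℂ)) w with ha1def
  set a2 := Wz (fun v => ((X 2 v : ℝ) : ℂ)) w with ha2def
  set a3 := Wz (fun v => ((X 3 v : ℝ) : ℂ)) w with ha3def
  have key : ∀ i, Wzb (fun v => ((X i v : ℝ) : ℂ)) w
      = (starRingEnd ℂ) (Wz (fun v => ((X i v : ℝ) : ℂ)) w) := fun i =>
    Wzb_conj_real (X i) w (hdr i)
  -- rewrite hypotheses into linear equations
  have e23 : (fun v => ((X 2 v : ℝ) : ℂ) + ((X 3 v : ℝ) : ℂ))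
      = fun v => ((X 2 v : ℝ) : ℂ) + (1 : ℂ) * ((X 3 v : ℝ) : ℂ) := by funext v; ring
  have e23' : (fun v => ((X 2 v : ℝ) : ℂ) - ((X 3 v : ℝ) : ℂ))
      = fun v => ((X 2 v : ℝ) : ℂ) + (-1 : ℂ) * ((X 3 v : ℝ) : ℂ) := by funext v; ring
  have eA : a0 + Complex.I * a1 = φ₁ w * (starRingEnd ℂ) (ψ₂ w) := by
    rw [ha0def, ha1def, ← Wz_comb _ _ _ _ (hd 0) (hd 1)]; exact hXa w
  have eB : (starRingEnd ℂ) a0 + Complex.I * (starRingEnd ℂ) a1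
      = ψ₁ w * (starRingEnd ℂ) (φ₂ w) := by
    rw [ha0def, ha1def, ← key 0, ← key 1, ← Wzb_comb _ _ _ _ (hd 0) (hd 1)]; exact hXb w
  have eB' : a0 - Complex.I * a1 = (starRingEnd ℂ) (ψ₁ w) * φ₂ w := by
    have := congrArg (starRingEnd ℂ) eB
    simp only [map_add, map_mul, Complex.conj_I, RingHom.id_apply, Complex.conj_conj] at this
    linear_combination this
  have eC : a2 + a3 = (starRingEnd ℂ) (ψ₁ w) * φ₁ w := by
    rw [ha2def, ha3def]
    have := hXc w
    rw [e23, Wz_comb _ _ _ _ (hd 2) (hd 3)] at this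
    linear_combination this
  have eD : a2 - a3 = -((starRingEnd ℂ) (ψ₂ w) * φ₂ w) := by
    rw [ha2def, ha3def]
    have := hXe w
    rw [e23', Wz_comb _ _ _ _ (hd 2) (hd 3)] at this
    linear_combination this
  -- abbreviations
  obtain ⟨u1, hu1⟩ : ∃ z, ψ₁ w = z := ⟨_, rfl⟩
  obtain ⟨v1, hv1⟩ : ∃ z, φ₁ w = z := ⟨_, rfl⟩
  obtain ⟨u2, hu2⟩ : ∃ z, ψ₂ w = z := ⟨_, rfl⟩
  obtain ⟨v2, hv2⟩ : ∃ z, φ₂ w = z := ⟨_, rfl⟩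
  simp only [hu1, hv1, hu2, hv2] at eA eB' eC eD ⊢
  have hIsq : (Complex.I : ℂ) ^ 2 = -1 := Complex.I_sq
  -- explicit solutions
  have s0 : a0 = (v1 * (starRingEnd ℂ) u2 + (starRingEnd ℂ) u1 * v2) / 2 := by linear_combination eA / 2 + eB' / 2
  have s1 : a1 = -Complex.I * (v1 * (starRingEnd ℂ) u2 - (starRingEnd ℂ) u1 * v2) / 2 := by
    linear_combination (-Complex.I / 2) * eA + (Complex.I / 2) * eB' + a1 * hIsq
  have s2 : a2 = ((starRingEnd ℂ) u1 * v1 - (starRingEnd ℂ) u2 * v2) / 2 := by linear_combination eC / 2 + eD / 2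
  have s3 : a3 = ((starRingEnd ℂ) u1 * v1 + (starRingEnd ℂ) u2 * v2) / 2 := by linear_combination eC / 2 - eD / 2
  have c0 : (starRingEnd ℂ) a0 = ((starRingEnd ℂ) v1 * u2 + u1 * (starRingEnd ℂ) v2) / 2 := by
    rw [s0]; simp only [map_div₀, map_add, map_mul, Complex.conj_conj, map_ofNat]
  have c1 : (starRingEnd ℂ) a1 = Complex.I * ((starRingEnd ℂ) v1 * u2 - u1 * (starRingEnd ℂ) v2) / 2 := by
    rw [s1]; simp only [map_div₀, map_sub, map_mul, map_neg, Complex.conj_I, Complex.conj_conj,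
      map_ofNat]; ring
  have c2 : (starRingEnd ℂ) a2 = (u1 * (starRingEnd ℂ) v1 - u2 * (starRingEnd ℂ) v2) / 2 := by
    rw [s2]; simp only [map_div₀, map_sub, map_mul, Complex.conj_conj, map_ofNat]
  have c3 : (starRingEnd ℂ) a3 = (u1 * (starRingEnd ℂ) v1 + u2 * (starRingEnd ℂ) v2) / 2 := by
    rw [s3]; simp only [map_div₀, map_add, map_mul, Complex.conj_conj, map_ofNat]
  have hns : ((Complex.normSq (u1 * v2 - v1 * u2) : ℝ) : ℂ)
      = ((starRingEnd ℂ) u1 * (starRingEnd ℂ) v2 - (starRingEnd ℂ) v1 * (starRingEnd ℂ) u2) * (u1 * v2 - v1 * u2) := by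
    rw [Complex.normSq_eq_conj_mul_self]
    simp only [map_sub, map_mul]
  refine ⟨?_, ?_, ?_⟩
  · rw [Fin.sum_univ_four]
    simp only [Matrix.cons_val_zero, Matrix.cons_val_one, Matrix.head_cons,
      Matrix.cons_val_two, Matrix.tail_cons, Matrix.cons_val_three]
    rw [← ha0def, ← ha1def, ← ha2def, ← ha3def, s0, s1, s2, s3]
    linear_combination (((v1 * (starRingEnd ℂ) u2 - (starRingEnd ℂ) u1 * v2) / 2) ^ 2) * hIsq
  · rw [Fin.sum_univ_four]
    simp only [Matrix.cons_val_zero, Matrix.cons_val_one, Matrix.head_cons,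
      Matrix.cons_val_two, Matrix.tail_cons, Matrix.cons_val_three]
    rw [key 0, key 1, key 2, key 3, ← ha0def, ← ha1def, ← ha2def, ← ha3def, c0, c1, c2, c3]
    linear_combination ((((starRingEnd ℂ) v1 * u2 - u1 * (starRingEnd ℂ) v2) / 2) ^ 2) * hIsq
  · rw [Fin.sum_univ_four]
    simp only [Matrix.cons_val_zero, Matrix.cons_val_one, Matrix.head_cons,
      Matrix.cons_val_two, Matrix.tail_cons, Matrix.cons_val_three]
    rw [key 0, key 1, key 2, key 3, ← ha0def, ← ha1def, ← ha2def, ← ha3def,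
      c0, c1, c2, c3, s0, s1, s2, s3, hns]
    linear_combination (-((v1 * (starRingEnd ℂ) u2 - (starRingEnd ℂ) u1 * v2) / 2) * (((starRingEnd ℂ) v1 * u2 - u1 * (starRingEnd ℂ) v2) / 2)) * hIsq
end
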